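/- arXiv:2501.16261 — 6 statements merged into one kernel-verified Lean document; each statement's English description precedes it below -/
import Mathlib

section
/- Let Ψ: ℝⁿ → ℂ be measurable with Re Ψ ≥ 0 and sup_{ξ ∈ ℝⁿ} |Ψ(ξ)| / (1 + ‖ξ‖²) < ∞, and let μ be a nonnegative Borel measure on ℝⁿ satisfying Dalang's condition ∫_{ℝⁿ} μ(dξ) / (1 + Re Ψ(ξ)) < ∞. Then the fractal indices satisfy I_l ≤ I_m ≤ I_u. -/
open MeasureTheory Complex Set

noncomputable section

/-- The upper fractal index `I_u` (with `sSup ∅ = 0` in `ℝ`). -/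
def fractalIndexU (n : ℕ) (Ψ : EuclideanSpace ℝ (Fin n) → ℂ)
    (μ : Measure (EuclideanSpace ℝ (Fin n))) : ℝ :=
  sSup {η : ℝ | η ∈ Set.Ioo (0 : ℝ) 1 ∧
    Integrable (fun ξ => ((1 + (Ψ ξ).re) ^ (1 - η))⁻¹) μ}

/-- The middle fractal index `I_m` (with `sSup ∅ = 0` in `ℝ`). -/
def fractalIndexM (n : ℕ) (Ψ : EuclideanSpace ℝ (Fin n) → ℂ)
    (μ : Measure (EuclideanSpace ℝ (Fin n))) : ℝ :=
  sSup {γ : ℝ | γ ∈ Set.Ioo (0 : ℝ) 1 ∧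
    Integrable (fun ξ => ‖Ψ ξ‖ ^ γ / (1 + (Ψ ξ).re)) μ}

/-- The lower fractal index `I_l` (with `sSup ∅ = 0` in `ℝ`). -/
def fractalIndexL (n : ℕ) (Ψ : EuclideanSpace ℝ (Fin n) → ℂ)
    (μ : Measure (EuclideanSpace ℝ (Fin n))) : ℝ :=
  sSup {δ : ℝ | δ ∈ Set.Ioo (0 : ℝ) 1 ∧
    Integrable (fun ξ => ‖ξ‖ ^ (2 * δ) / (1 + (Ψ ξ).re)) μ}

/-!
Both inequalities are inclusions between the sets whose suprema define the indices, coming from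
pointwise bounds and subadditivity of `t ↦ t ^ p` for `p ≤ 1`. By the quadratic growth of `Ψ`,
`|Ψ ξ| ^ δ ≤ C ^ δ (1 + ‖ξ‖ ^ (2δ))`; and since `Re Ψ ≤ |Ψ|`,
`(1 + Re Ψ) ^ (γ - 1) = (1 + Re Ψ) ^ γ / (1 + Re Ψ) ≤ (1 + |Ψ| ^ γ) / (1 + Re Ψ)`.
Dalang's condition absorbs the constant terms.
-/

lemma sSup_setOf_mem_Ioo_and_mono {P Q : ℝ → Prop} (hPQ : ∀ x ∈ Ioo (0 : ℝ) 1, P x → Q x) :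
    sSup {x | x ∈ Ioo (0 : ℝ) 1 ∧ P x} ≤ sSup {x | x ∈ Ioo (0 : ℝ) 1 ∧ Q x} := by
  rcases eq_empty_or_nonempty {x | x ∈ Ioo (0 : ℝ) 1 ∧ P x} with hempty | hne
  · rw [hempty, Real.sSup_empty]
    exact Real.sSup_nonneg fun x hx => hx.1.1.le
  · exact csSup_le_csSup ⟨1, fun x hx => hx.1.2.le⟩ hne fun x hx => ⟨hx.1, hPQ x hx.1 hx.2⟩

lemma inv_one_add_rpow_one_sub_le {r a γ : ℝ} (hr : 0 ≤ r) (hra : r ≤ a) (hγ0 : 0 ≤ γ)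
    (hγ1 : γ ≤ 1) : ((1 + r) ^ (1 - γ))⁻¹ ≤ (1 + r)⁻¹ + a ^ γ / (1 + r) := by
  have hr1 : 0 < 1 + r := by linarith
  calc ((1 + r) ^ (1 - γ))⁻¹ = (1 + r) ^ γ / (1 + r) := by
        rw [← Real.rpow_neg hr1.le, neg_sub, Real.rpow_sub hr1, Real.rpow_one]
    _ ≤ (1 + a) ^ γ / (1 + r) := by gcongr
    _ ≤ (1 + a ^ γ) / (1 + r) := by
        gcongr
        simpa using Real.rpow_add_le_add_rpow zero_le_one (hr.trans hra) hγ0 hγ1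
    _ = (1 + r)⁻¹ + a ^ γ / (1 + r) := by rw [add_div, one_div]

lemma rpow_le_rpow_mul_one_add_rpow {a C t δ : ℝ} (ha : 0 ≤ a) (ht : 0 ≤ t)
    (haC : a ≤ C * (1 + t ^ 2)) (hδ0 : 0 ≤ δ) (hδ1 : δ ≤ 1) :
    a ^ δ ≤ C ^ δ * (1 + t ^ (2 * δ)) := by
  have hC : 0 ≤ C := nonneg_of_mul_nonneg_left (ha.trans haC) (by positivity)
  calc a ^ δ ≤ (C * (1 + t ^ 2)) ^ δ := Real.rpow_le_rpow ha haC hδ0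
    _ = C ^ δ * (1 + t ^ 2) ^ δ := Real.mul_rpow hC (by positivity)
    _ ≤ C ^ δ * (1 + t ^ (2 * δ)) := by
        gcongr
        calc (1 + t ^ 2) ^ δ ≤ 1 ^ δ + (t ^ 2) ^ δ :=
              Real.rpow_add_le_add_rpow zero_le_one (by positivity) hδ0 hδ1
          _ = 1 + t ^ (2 * δ) := by
              rw [Real.one_rpow, ← Real.rpow_natCast_mul ht, Nat.cast_ofNat]

section Integrability

variable {α : Type*} [MeasurableSpace α] {Ψ : α → ℂ} {μ : Measure α}

lemma integrable_inv_one_add_re_rpow_of_integrable_norm_rpow_div (hΨmeas : Measurable Ψ)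
    (hΨre : ∀ x, 0 ≤ (Ψ x).re) (hDalang : Integrable (fun x => (1 + (Ψ x).re)⁻¹) μ)
    {γ : ℝ} (hγ0 : 0 ≤ γ) (hγ1 : γ ≤ 1)
    (hint : Integrable (fun x => ‖Ψ x‖ ^ γ / (1 + (Ψ x).re)) μ) :
    Integrable (fun x => ((1 + (Ψ x).re) ^ (1 - γ))⁻¹) μ := by
  refine (hDalang.add hint).mono' (by fun_prop : Measurable _).aestronglyMeasurable
    (ae_of_all _ fun x => ?_)
  have hr1 : 0 < 1 + (Ψ x).re := by linarith [hΨre x]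
  rw [Real.norm_of_nonneg (by positivity), Pi.add_apply]
  exact inv_one_add_rpow_one_sub_le (hΨre x) (re_le_norm _) hγ0 hγ1

lemma integrable_norm_rpow_div_of_integrable_norm_rpow_two_mul_div [SeminormedAddGroup α]
    (hΨmeas : Measurable Ψ) (hΨre : ∀ ξ, 0 ≤ (Ψ ξ).re) {C : ℝ}
    (hΨgrowth : ∀ ξ, ‖Ψ ξ‖ ≤ C * (1 + ‖ξ‖ ^ 2))
    (hDalang : Integrable (fun ξ => (1 + (Ψ ξ).re)⁻¹) μ) {δ : ℝ} (hδ0 : 0 ≤ δ) (hδ1 : δ ≤ 1)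
    (hint : Integrable (fun ξ => ‖ξ‖ ^ (2 * δ) / (1 + (Ψ ξ).re)) μ) :
    Integrable (fun ξ => ‖Ψ ξ‖ ^ δ / (1 + (Ψ ξ).re)) μ := by
  refine ((hDalang.add hint).const_mul (C ^ δ)).mono'
    (by fun_prop : Measurable _).aestronglyMeasurable (ae_of_all _ fun ξ => ?_)
  have hr1 : 0 < 1 + (Ψ ξ).re := by linarith [hΨre ξ]
  rw [Real.norm_of_nonneg (by positivity), Pi.add_apply, inv_eq_one_div, ← add_div,
    ← mul_div_assoc]
  gcongr
  exact rpow_le_rpow_mul_one_add_rpow (norm_nonneg _) (norm_nonneg _) (hΨgrowth ξ) hδ0 hδ1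

end Integrability

theorem stmt1 (n : ℕ) (Ψ : EuclideanSpace ℝ (Fin n) → ℂ) (hΨmeas : Measurable Ψ)
    (hΨre : ∀ ξ, 0 ≤ (Ψ ξ).re)
    (hΨgrowth : ∃ C : ℝ, ∀ ξ, ‖Ψ ξ‖ ≤ C * (1 + ‖ξ‖ ^ 2))
    (μ : Measure (EuclideanSpace ℝ (Fin n)))
    (hDalang : Integrable (fun ξ => (1 + (Ψ ξ).re)⁻¹) μ) :
    fractalIndexL n Ψ μ ≤ fractalIndexM n Ψ μ ∧
      fractalIndexM n Ψ μ ≤ fractalIndexU n Ψ μ := by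
  obtain ⟨C, hC⟩ := hΨgrowth
  exact ⟨sSup_setOf_mem_Ioo_and_mono fun δ hδ =>
      integrable_norm_rpow_div_of_integrable_norm_rpow_two_mul_div hΨmeas hΨre hC hDalang
        hδ.1.le hδ.2.le,
    sSup_setOf_mem_Ioo_and_mono fun γ hγ =>
      integrable_inv_one_add_re_rpow_of_integrable_norm_rpow_div hΨmeas hΨre hDalang
        hγ.1.le hγ.2.le⟩
end
end

section
/- Let I₀ ∈ (0,1) and let Ψ: ℝⁿ → ℂ be measurable such that: (i) |Ψ(ξ)| ≤ L(1 + ‖ξ‖²) for all ξ and some L > 0; (ii) the set {ξ ∈ ℝⁿ : |Ψ(ξ)| ≤ 1} is bounded; (iii) there exists m > 0 with |Ψ(ξ)| ≤ 1 whenever ‖ξ‖ < m; and (iv) ∫_{‖ξ‖ ≤ 1} |Ψ(ξ)| / ‖ξ‖^{n+I₀} dξ < ∞. Then for every κ ∈ (0, I₀/2), ∫_0^1 t^{−1−κ} ( ∫_{ℝⁿ} min(t|Ψ(ξ)|, 1) / ‖ξ‖^{n+I₀} dξ ) dt < ∞. -/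
/-!
Fix `α` with `κ < α < I₀ / 2`. Since `min s 1 ≤ s ^ α`, the inner integral is `O(t ^ α)`:
on the unit ball `min (t |Ψ|) 1 ≤ t |Ψ| ≤ t ^ α |Ψ|` and (iv) applies, while outside it the
growth bound gives `min (t |Ψ ξ|) 1 / ‖ξ‖ ^ (n + I₀) ≲ t ^ α (1 + ‖ξ‖) ^ (2 α - n - I₀)`, which is
integrable at infinity because `2 α < I₀`. Finally `t ^ (-1 - κ) * t ^ α` is integrable on
`(0, 1)` because `α > κ`.
-/

open MeasureTheory Set ENNReal Module

namespace Real

lemma min_one_le_rpow {a α : ℝ} (ha : 0 ≤ a) (hα0 : 0 ≤ α) (hα1 : α ≤ 1) :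
    min a 1 ≤ a ^ α := by
  rcases le_total a 1 with h | h
  · exact (min_le_left _ _).trans (self_le_rpow_of_le_one ha h hα1)
  · exact (min_le_right _ _).trans (one_le_rpow h hα0)

lemma rpow_neg_le_two_rpow_mul_one_add_rpow_neg {x r : ℝ} (hx : 1 ≤ x) (hr : 0 ≤ r) :
    x ^ (-r) ≤ 2 ^ r * (1 + x) ^ (-r) := by
  have hx0 : 0 < x := one_pos.trans_le hx
  calc x ^ (-r) = 2 ^ r * (2 * x) ^ (-r) := by
        rw [mul_rpow zero_le_two hx0.le, ← mul_assoc, ← rpow_add zero_lt_two, add_neg_cancel,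
          rpow_zero, one_mul]
    _ ≤ 2 ^ r * (1 + x) ^ (-r) := by
        gcongr 2 ^ r * ?_
        exact rpow_le_rpow_of_nonpos (by positivity) (by linarith) (neg_nonpos.2 hr)

lemma min_mul_div_rpow_le {a t x L p α : ℝ} (ha : 0 ≤ a) (ht : 0 ≤ t) (hx : 1 ≤ x)
    (hα0 : 0 ≤ α) (hα1 : α ≤ 1) (hαp : 2 * α ≤ p) (haL : a ≤ L * (1 + x ^ 2)) :
    min (t * a) 1 / x ^ p ≤ t ^ α * ((2 * L) ^ α * 2 ^ (p - 2 * α)) * (1 + x) ^ (-(p - 2 * α)) := by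
  have hx0 : 0 < x := one_pos.trans_le hx
  have hL : 0 ≤ L := nonneg_of_mul_nonneg_left (ha.trans haL) (by positivity)
  have ha' : a ≤ 2 * L * x ^ (2 : ℝ) := by
    rw [rpow_two]
    nlinarith [mul_nonneg hL (by nlinarith : (0 : ℝ) ≤ x ^ 2 - 1)]
  calc min (t * a) 1 / x ^ p ≤ (t * a) ^ α / x ^ p := by
        gcongr
        exact min_one_le_rpow (by positivity) hα0 hα1
    _ ≤ t ^ α * (2 * L * x ^ (2 : ℝ)) ^ α / x ^ p := by
        rw [mul_rpow ht ha]
        gcongr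
    _ = t ^ α * (2 * L) ^ α * x ^ (-(p - 2 * α)) := by
        rw [mul_rpow (by positivity) (by positivity), ← rpow_mul hx0.le, neg_sub,
          rpow_sub hx0]
        ring
    _ ≤ t ^ α * (2 * L) ^ α * (2 ^ (p - 2 * α) * (1 + x) ^ (-(p - 2 * α))) := by
        gcongr
        exact rpow_neg_le_two_rpow_mul_one_add_rpow_neg hx (by linarith)
    _ = _ := by ring

end Real

lemma setLIntegral_ofReal_min_mul_div_le {X : Type*} [MeasurableSpace X] {μ : Measure X}
    {s : Set X} {f w : X → ℝ} {t : ℝ} (ht : 0 ≤ t) (hw : ∀ x, 0 ≤ w x) :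
    ∫⁻ x in s, ENNReal.ofReal (min (t * f x) 1 / w x) ∂μ
      ≤ ENNReal.ofReal t * ∫⁻ x in s, ENNReal.ofReal (f x / w x) ∂μ := by
  rw [← lintegral_const_mul' _ _ ofReal_ne_top]
  gcongr with x
  rw [← ofReal_mul ht, ← mul_div_assoc]
  gcongr
  · exact hw x
  · exact min_le_left _ _

section NormedSpace

variable {E : Type*} [NormedAddCommGroup E] [MeasurableSpace E]

lemma setLIntegral_compl_closedBall_ofReal_min_mul_div_rpow_le [OpensMeasurableSpace E]
    {μ : Measure E} {f : E → ℝ} {t L p α : ℝ} (ht : 0 ≤ t) (hα0 : 0 ≤ α) (hα1 : α ≤ 1)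
    (hαp : 2 * α ≤ p) (hf0 : ∀ x, 0 ≤ f x) (hgrowth : ∀ x, f x ≤ L * (1 + ‖x‖ ^ 2)) :
    ∫⁻ x in {x | ‖x‖ ≤ 1}ᶜ, ENNReal.ofReal (min (t * f x) 1 / ‖x‖ ^ p) ∂μ
      ≤ ENNReal.ofReal (t ^ α) * (ENNReal.ofReal ((2 * L) ^ α * 2 ^ (p - 2 * α)) *
          ∫⁻ x, ENNReal.ofReal ((1 + ‖x‖) ^ (-(p - 2 * α))) ∂μ) := by
  have hs : MeasurableSet {x : E | ‖x‖ ≤ 1} := measurableSet_le measurable_norm measurable_const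
  calc ∫⁻ x in {x | ‖x‖ ≤ 1}ᶜ, ENNReal.ofReal (min (t * f x) 1 / ‖x‖ ^ p) ∂μ
      ≤ ∫⁻ x in {x | ‖x‖ ≤ 1}ᶜ, ENNReal.ofReal (t ^ α * ((2 * L) ^ α * 2 ^ (p - 2 * α))) *
          ENNReal.ofReal ((1 + ‖x‖) ^ (-(p - 2 * α))) ∂μ := by
        refine setLIntegral_mono' hs.compl fun x hx ↦ ?_
        have hx1 : 1 ≤ ‖x‖ := le_of_lt (by simpa using hx)
        have hL : 0 ≤ L := nonneg_of_mul_nonneg_left ((hf0 x).trans (hgrowth x)) (by positivity)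
        rw [← ofReal_mul (by positivity)]
        exact ofReal_le_ofReal
          (Real.min_mul_div_rpow_le (hf0 x) ht hx1 hα0 hα1 hαp (hgrowth x))
    _ ≤ ENNReal.ofReal (t ^ α * ((2 * L) ^ α * 2 ^ (p - 2 * α))) *
          ∫⁻ x, ENNReal.ofReal ((1 + ‖x‖) ^ (-(p - 2 * α))) ∂μ := by
        rw [lintegral_const_mul' _ _ ofReal_ne_top]
        gcongr
        exact Measure.restrict_le_self
    _ = _ := by rw [ofReal_mul (by positivity), mul_assoc]

variable [NormedSpace ℝ E] [FiniteDimensional ℝ E] [BorelSpace E]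

lemma exists_lintegral_ofReal_min_mul_div_rpow_le (μ : Measure E) [μ.IsAddHaarMeasure]
    {f : E → ℝ} {L p α : ℝ} (hα0 : 0 ≤ α) (hα1 : α ≤ 1) (hαp : finrank ℝ E + 2 * α < p)
    (hf0 : ∀ x, 0 ≤ f x) (hgrowth : ∀ x, f x ≤ L * (1 + ‖x‖ ^ 2))
    (hint : IntegrableOn (fun x ↦ f x / ‖x‖ ^ p) {x | ‖x‖ ≤ 1} μ) :
    ∃ C ≠ ∞, ∀ t ∈ Ioo (0 : ℝ) 1,
      ∫⁻ x, ENNReal.ofReal (min (t * f x) 1 / ‖x‖ ^ p) ∂μ ≤ ENNReal.ofReal (t ^ α) * C := by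
  have hs : MeasurableSet {x : E | ‖x‖ ≤ 1} := measurableSet_le measurable_norm measurable_const
  have hfar : ∫⁻ x, ENNReal.ofReal ((1 + ‖x‖) ^ (-(p - 2 * α))) ∂μ ≠ ∞ :=
    ((integrable_one_add_norm (by linarith)).lintegral_lt_top).ne
  refine ⟨∫⁻ x in {x | ‖x‖ ≤ 1}, ENNReal.ofReal (f x / ‖x‖ ^ p) ∂μ +
      ENNReal.ofReal ((2 * L) ^ α * 2 ^ (p - 2 * α)) *
        ∫⁻ x, ENNReal.ofReal ((1 + ‖x‖) ^ (-(p - 2 * α))) ∂μ,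
    add_ne_top.2 ⟨hint.setLIntegral_lt_top.ne, mul_ne_top ofReal_ne_top hfar⟩,
    fun t ⟨ht0, ht1⟩ ↦ ?_⟩
  rw [← lintegral_add_compl _ hs, mul_add]
  gcongr ?_ + ?_
  · calc _ ≤ ENNReal.ofReal t * ∫⁻ x in {x | ‖x‖ ≤ 1}, ENNReal.ofReal (f x / ‖x‖ ^ p) ∂μ :=
          setLIntegral_ofReal_min_mul_div_le ht0.le fun x ↦ by positivity
      _ ≤ _ := by
          gcongr
          exact Real.self_le_rpow_of_le_one ht0.le ht1.le hα1
  · exact setLIntegral_compl_closedBall_ofReal_min_mul_div_rpow_le ht0.le hα0 hα1 (by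
      linarith [(Nat.cast_nonneg (finrank ℝ E) : (0 : ℝ) ≤ finrank ℝ E)]) hf0 hgrowth

end NormedSpace

lemma setLIntegral_Ioo_ofReal_rpow_mul_lt_top {g : ℝ → ℝ≥0∞} {κ α : ℝ} {C : ℝ≥0∞}
    (hκα : κ < α) (hC : C ≠ ∞) (hg : ∀ t ∈ Ioo (0 : ℝ) 1, g t ≤ ENNReal.ofReal (t ^ α) * C) :
    ∫⁻ t in Ioo (0 : ℝ) 1, ENNReal.ofReal (t ^ (-1 - κ)) * g t < ∞ := by
  have hint : IntegrableOn (fun t : ℝ ↦ t ^ (α - 1 - κ)) (Ioo 0 1) := by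
    rw [intervalIntegral.integrableOn_Ioo_rpow_iff one_pos]
    linarith
  calc ∫⁻ t in Ioo (0 : ℝ) 1, ENNReal.ofReal (t ^ (-1 - κ)) * g t
      ≤ ∫⁻ t in Ioo (0 : ℝ) 1, ENNReal.ofReal (t ^ (α - 1 - κ)) * C := by
        refine setLIntegral_mono' measurableSet_Ioo fun t ht ↦ ?_
        calc ENNReal.ofReal (t ^ (-1 - κ)) * g t
            ≤ ENNReal.ofReal (t ^ (-1 - κ)) * (ENNReal.ofReal (t ^ α) * C) := by
              gcongr
              exact hg t ht
          _ = ENNReal.ofReal (t ^ (α - 1 - κ)) * C := by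
              rw [← mul_assoc, ← ofReal_mul (Real.rpow_nonneg ht.1.le _),
                ← Real.rpow_add ht.1]
              ring_nf
    _ = (∫⁻ t in Ioo (0 : ℝ) 1, ENNReal.ofReal (t ^ (α - 1 - κ))) * C :=
        lintegral_mul_const' C _ hC
    _ < ∞ := mul_lt_top hint.setLIntegral_lt_top hC.lt_top

theorem stmt10_general (n : ℕ) (I₀ : ℝ) (hI₀ : I₀ ∈ Set.Ioo (0 : ℝ) 1)
    (Ψ : EuclideanSpace ℝ (Fin n) → ℂ)
    (L : ℝ)
    (hgrowth : ∀ ξ : EuclideanSpace ℝ (Fin n), ‖Ψ ξ‖ ≤ L * (1 + ‖ξ‖ ^ 2))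
    (hint : IntegrableOn
      (fun ξ : EuclideanSpace ℝ (Fin n) => ‖Ψ ξ‖ / ‖ξ‖ ^ ((n : ℝ) + I₀))
      {ξ : EuclideanSpace ℝ (Fin n) | ‖ξ‖ ≤ 1}) :
    ∀ κ : ℝ, κ ∈ Set.Ioo (0 : ℝ) (I₀ / 2) →
      ∫⁻ t in Set.Ioo (0 : ℝ) 1,
          ENNReal.ofReal (t ^ (-1 - κ)) *
            ∫⁻ ξ : EuclideanSpace ℝ (Fin n),
              ENNReal.ofReal (min (t * ‖Ψ ξ‖) 1 / ‖ξ‖ ^ ((n : ℝ) + I₀)) < ⊤ := by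
  rintro κ ⟨hκ0, hκI⟩
  obtain ⟨C, hC, hinner⟩ := exists_lintegral_ofReal_min_mul_div_rpow_le volume
    (α := (κ + I₀ / 2) / 2) (by linarith) (by linarith [hI₀.2])
    (by rw [finrank_euclideanSpace_fin]; linarith) (fun ξ ↦ norm_nonneg (Ψ ξ)) hgrowth hint
  exact setLIntegral_Ioo_ofReal_rpow_mul_lt_top (by linarith) hC hinner

theorem stmt10 (n : ℕ) (I₀ : ℝ) (hI₀ : I₀ ∈ Set.Ioo (0 : ℝ) 1)
    (Ψ : EuclideanSpace ℝ (Fin n) → ℂ) (hΨmeas : Measurable Ψ)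
    (L : ℝ) (hL : 0 < L)
    (hgrowth : ∀ ξ : EuclideanSpace ℝ (Fin n), ‖Ψ ξ‖ ≤ L * (1 + ‖ξ‖ ^ 2))
    (hbdd : Bornology.IsBounded {ξ : EuclideanSpace ℝ (Fin n) | ‖Ψ ξ‖ ≤ 1})
    (hm : ∃ m : ℝ, 0 < m ∧ ∀ ξ : EuclideanSpace ℝ (Fin n), ‖ξ‖ < m → ‖Ψ ξ‖ ≤ 1)
    (hint : IntegrableOn
      (fun ξ : EuclideanSpace ℝ (Fin n) => ‖Ψ ξ‖ / ‖ξ‖ ^ ((n : ℝ) + I₀))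
      {ξ : EuclideanSpace ℝ (Fin n) | ‖ξ‖ ≤ 1}) :
    ∀ κ : ℝ, κ ∈ Set.Ioo (0 : ℝ) (I₀ / 2) →
      ∫⁻ t in Set.Ioo (0 : ℝ) 1,
          ENNReal.ofReal (t ^ (-1 - κ)) *
            ∫⁻ ξ : EuclideanSpace ℝ (Fin n),
              ENNReal.ofReal (min (t * ‖Ψ ξ‖) 1 / ‖ξ‖ ^ ((n : ℝ) + I₀)) < ⊤ :=
  stmt10_general n I₀ hI₀ Ψ L hgrowth hint
end

section
/- Fix n ≥ 1, T > 0, β > 0, κ > 0, I₀ ∈ (0,1), θ ∈ (0,1] and constants C₁, C₂ > 0. Suppose that for each t ∈ (0,2T], p_t: ℝⁿ → [0,∞) is a measurable probability density (∫_{ℝⁿ} p_t(x) dx = 1) satisfying: (i) |p_{t+ε}(x) − p_t(x)| ≤ C₁ ε^θ t^{−(2θ+n)/β} for all x ∈ ℝⁿ, all t ∈ (0,T] and all ε ∈ (0,T], and (ii) ∫_{ℝⁿ} ‖x‖^{I₀} p_t(x) dx ≤ C₂ t^κ for all t ∈ (0,2T]. Then for every ω ∈ (0,1] there is a constant C > 0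 such that for all t ∈ (0,T] and all ε ∈ (0,T], ∫_{ℝⁿ} |p_{t+ε}(x) − p_t(x)| dx ≤ C ( ε^θ t^{−((2θ+n)/β + κ)} )^{ω I₀/(n+I₀)}. -/
/-!
Split `ℝⁿ` into the ball of radius `R` and its complement. On the ball the pointwise bound
`δ = C₁ ε^θ t^(-(2θ+n)/β)` contributes at most `δ · vol(B_R) ≍ δ Rⁿ`; off the ball Markov's
inequality, with the `I₀`-th moments of both densities bounded by `M = C₂ (2T)^κ`, contributes
at most `2 M R^(-I₀)`. The choice
`R = δ^(-1/(n+I₀))` makes both of order `δ^(I₀/(n+I₀))`, and `δ = C₁ X t^κ` with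
`X = ε^θ t^(-((2θ+n)/β+κ))`, so the `L¹` distance is `O(X^(I₀/(n+I₀)))`. Lowering the exponent
by `ω ≤ 1` costs nothing when `X ≤ 1`, and for `X > 1` the trivial bound `2` suffices.
-/

open MeasureTheory Set Metric Module

theorem integral_abs_sub_le_integral_add {α : Type*} [MeasurableSpace α] {μ : Measure α}
    {f g : α → ℝ} (hf : Integrable f μ) (hg : Integrable g μ)
    (hf0 : 0 ≤ f) (hg0 : 0 ≤ g) :
    ∫ x, |f x - g x| ∂μ ≤ ∫ x, f x ∂μ + ∫ x, g x ∂μ := by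
  rw [← integral_add hf hg]
  refine integral_mono (hf.sub hg).abs (hf.add hg) fun x => ?_
  calc |f x - g x| ≤ |f x| + |g x| := abs_sub _ _
    _ = f x + g x := by rw [abs_of_nonneg (hf0 x), abs_of_nonneg (hg0 x)]

theorem setIntegral_compl_ball_le_of_lintegral_norm_rpow_mul_le {E : Type*}
    [NormedAddCommGroup E] [MeasurableSpace E] [OpensMeasurableSpace E] {μ : Measure E}
    {f : E → ℝ} (hf : Integrable f μ) (hf0 : 0 ≤ f) {a R M : ℝ} (ha : 0 ≤ a) (hR : 0 < R)
    (hM : 0 ≤ M)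
    (hmom : ∫⁻ x, ENNReal.ofReal (‖x‖ ^ a * f x) ∂μ ≤ ENNReal.ofReal M) :
    ∫ x in (ball 0 R)ᶜ, f x ∂μ ≤ M * R ^ (-a) := by
  set w : E → ℝ := fun x => ‖x‖ ^ a * f x
  have hw0 : 0 ≤ w := fun x => mul_nonneg (by positivity) (hf0 x)
  have hw_meas : AEStronglyMeasurable w μ :=
    (continuous_norm.rpow_const fun _ => Or.inr ha).aestronglyMeasurable.mul
      hf.aestronglyMeasurable
  have hw : Integrable w μ :=
    ⟨hw_meas, (hasFiniteIntegral_iff_ofReal (.of_forall hw0)).2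
      (hmom.trans_lt ENNReal.ofReal_lt_top)⟩
  have hw_le : ∫ x, w x ∂μ ≤ M := by
    rw [integral_eq_lintegral_of_nonneg_ae (.of_forall hw0) hw_meas]
    exact ENNReal.toReal_le_of_le_ofReal hM hmom
  have hpoint : ∀ x ∈ (ball (0 : E) R)ᶜ, f x ≤ R ^ (-a) * w x := by
    intro x hx
    have hxR : R ≤ ‖x‖ := by simpa using hx
    rw [← mul_assoc]
    refine le_mul_of_one_le_left (hf0 x) ?_
    rw [Real.rpow_neg hR.le, inv_mul_eq_div, one_le_div (by positivity)]
    exact Real.rpow_le_rpow hR.le hxR ha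
  calc ∫ x in (ball 0 R)ᶜ, f x ∂μ ≤ ∫ x in (ball 0 R)ᶜ, R ^ (-a) * w x ∂μ :=
        setIntegral_mono_on hf.integrableOn (hw.const_mul _).integrableOn
          measurableSet_ball.compl hpoint
    _ ≤ ∫ x, R ^ (-a) * w x ∂μ :=
        setIntegral_le_integral (hw.const_mul _)
          (.of_forall fun x => mul_nonneg (by positivity) (hw0 x))
    _ = R ^ (-a) * ∫ x, w x ∂μ := integral_const_mul _ _
    _ ≤ M * R ^ (-a) := by rw [mul_comm M]; gcongr

section Interpolation

variable {E : Type*} [NormedAddCommGroup E] [NormedSpace ℝ E] [FiniteDimensional ℝ E]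
  [MeasurableSpace E] [BorelSpace E] (μ : Measure E) [μ.IsAddHaarMeasure]

theorem setIntegral_ball_le_of_norm_le {h : E → ℝ} {δ R : ℝ} (hR : 0 < R)
    (hδ : ∀ x, ‖h x‖ ≤ δ) :
    ∫ x in ball 0 R, h x ∂μ ≤ δ * R ^ finrank ℝ E * μ.real (ball 0 1) := by
  have hvol : μ.real (ball 0 R) = R ^ finrank ℝ E * μ.real (ball 0 1) := by
    rw [measureReal_def, Measure.addHaar_ball_of_pos μ _ hR, ENNReal.toReal_mul,
      ENNReal.toReal_ofReal (by positivity), measureReal_def]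
  calc ∫ x in ball 0 R, h x ∂μ ≤ ‖∫ x in ball 0 R, h x ∂μ‖ := Real.le_norm_self _
    _ ≤ δ * μ.real (ball 0 R) :=
        norm_setIntegral_le_of_norm_le_const measure_ball_lt_top fun x _ => hδ x
    _ = δ * R ^ finrank ℝ E * μ.real (ball 0 1) := by rw [hvol, mul_assoc]

theorem integral_abs_sub_le_of_abs_sub_le_of_moment {f g : E → ℝ} (hf : Integrable f μ)
    (hg : Integrable g μ) (hf0 : 0 ≤ f) (hg0 : 0 ≤ g) {a δ M : ℝ} (ha : 0 < a) (hδ : 0 < δ)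
    (hM : 0 ≤ M) (hfg : ∀ x, |f x - g x| ≤ δ)
    (hfM : ∫⁻ x, ENNReal.ofReal (‖x‖ ^ a * f x) ∂μ ≤ ENNReal.ofReal M)
    (hgM : ∫⁻ x, ENNReal.ofReal (‖x‖ ^ a * g x) ∂μ ≤ ENNReal.ofReal M) :
    ∫ x, |f x - g x| ∂μ ≤ (μ.real (ball 0 1) + 2 * M) * δ ^ (a / (finrank ℝ E + a)) := by
  set d : ℝ := (finrank ℝ E : ℝ)
  have hda : 0 < d + a := by positivity
  -- the radius balancing the two contributions `δ R ^ d` and `M R ^ (-a)`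
  set R := δ ^ (-1 / (d + a))
  have hR : 0 < R := by positivity
  have hball_exp : δ * R ^ finrank ℝ E = δ ^ (a / (d + a)) := by
    have hexp : 1 + -1 / (d + a) * d = a / (d + a) := by field_simp; ring
    rw [← Real.rpow_natCast, ← Real.rpow_mul hδ.le,
      ← Real.rpow_one_add' hδ.le (by rw [hexp]; positivity), hexp]
  have htail_exp : R ^ (-a) = δ ^ (a / (d + a)) := by
    rw [← Real.rpow_mul hδ.le]; congr 1; field_simp
  have hball := setIntegral_ball_le_of_norm_le μ (h := fun x => |f x - g x|) hR
    fun x => by simpa using hfg x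
  have htail : ∫ x in (ball 0 R)ᶜ, |f x - g x| ∂μ ≤ 2 * M * R ^ (-a) :=
    calc ∫ x in (ball 0 R)ᶜ, |f x - g x| ∂μ
        ≤ ∫ x in (ball 0 R)ᶜ, f x ∂μ + ∫ x in (ball 0 R)ᶜ, g x ∂μ :=
          integral_abs_sub_le_integral_add hf.integrableOn hg.integrableOn hf0 hg0
      _ ≤ M * R ^ (-a) + M * R ^ (-a) := add_le_add
          (setIntegral_compl_ball_le_of_lintegral_norm_rpow_mul_le hf hf0 ha.le hR hM hfM)
          (setIntegral_compl_ball_le_of_lintegral_norm_rpow_mul_le hg hg0 ha.le hR hM hgM)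
      _ = 2 * M * R ^ (-a) := by ring
  rw [← integral_add_compl measurableSet_ball (f := fun x => |f x - g x|) (hf.sub hg).abs]
  calc _ ≤ δ * R ^ finrank ℝ E * μ.real (ball 0 1) + 2 * M * R ^ (-a) := add_le_add hball htail
    _ = _ := by rw [hball_exp, htail_exp]; ring

end Interpolation

theorem le_add_mul_rpow_of_le_of_le_mul_rpow {y c K X a b : ℝ} (hX : 0 < X) (hc : 0 ≤ c)
    (hK : 0 ≤ K) (hb : 0 ≤ b) (hba : b ≤ a) (hyc : y ≤ c) (hyK : y ≤ K * X ^ a) :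
    y ≤ (c + K) * X ^ b := by
  have hXb : 0 ≤ X ^ b := by positivity
  rcases le_or_gt X 1 with hX1 | hX1
  · calc y ≤ K * X ^ a := hyK
      _ ≤ K * X ^ b := mul_le_mul_of_nonneg_left (Real.rpow_le_rpow_of_exponent_ge hX hX1 hba) hK
      _ ≤ (c + K) * X ^ b := by gcongr; linarith
  · calc y ≤ c * 1 := by rw [mul_one]; exact hyc
      _ ≤ c * X ^ b := by gcongr; exact Real.one_le_rpow hX1.le hb
      _ ≤ (c + K) * X ^ b := by gcongr; linarith

theorem rpow_mul_rpow_neg_le {c e t T A κ a : ℝ} (hc : 0 ≤ c) (he : 0 ≤ e) (ht : 0 < t)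
    (htT : t ≤ T) (hκ : 0 ≤ κ) (ha : 0 ≤ a) :
    (c * e * t ^ (-A)) ^ a ≤ c ^ a * T ^ (κ * a) * (e * t ^ (-(A + κ))) ^ a := by
  have hsplit : t ^ (-A) = t ^ κ * t ^ (-(A + κ)) := by
    rw [← Real.rpow_add ht]; ring_nf
  calc (c * e * t ^ (-A)) ^ a = c ^ a * (t ^ κ) ^ a * (e * t ^ (-(A + κ))) ^ a := by
        rw [hsplit, ← Real.mul_rpow (by positivity) (by positivity),
          ← Real.mul_rpow (by positivity) (by positivity)]
        ring_nf
    _ ≤ c ^ a * T ^ (κ * a) * (e * t ^ (-(A + κ))) ^ a := by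
        rw [← Real.rpow_mul ht.le]
        gcongr

theorem stmt14_general (n : ℕ) (T β κ I₀ θ C₁ C₂ : ℝ)
    (hT : 0 < T) (hκ : 0 < κ) (hI₀ : I₀ ∈ Set.Ioo (0 : ℝ) 1)
    (hC₁ : 0 < C₁) (hC₂ : 0 < C₂)
    (p : ℝ → EuclideanSpace ℝ (Fin n) → ℝ)
    (hnonneg : ∀ t ∈ Set.Ioc (0 : ℝ) (2 * T), ∀ x, 0 ≤ p t x)
    (hintble : ∀ t ∈ Set.Ioc (0 : ℝ) (2 * T), Integrable (p t))
    (hprob : ∀ t ∈ Set.Ioc (0 : ℝ) (2 * T), ∫ x, p t x = 1)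
    (hsup : ∀ t ∈ Set.Ioc (0 : ℝ) T, ∀ ε ∈ Set.Ioc (0 : ℝ) T, ∀ x : EuclideanSpace ℝ (Fin n),
      |p (t + ε) x - p t x| ≤ C₁ * ε ^ θ * t ^ (-((2 * θ + n) / β)))
    (hmom : ∀ t ∈ Set.Ioc (0 : ℝ) (2 * T),
      ∫⁻ x, ENNReal.ofReal (‖x‖ ^ I₀ * p t x) ≤ ENNReal.ofReal (C₂ * t ^ κ)) :
    ∀ ω : ℝ, ω ∈ Set.Ioc (0 : ℝ) 1 →
      ∃ C : ℝ, 0 < C ∧ ∀ t ∈ Set.Ioc (0 : ℝ) T, ∀ ε ∈ Set.Ioc (0 : ℝ) T,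
        ∫ x, |p (t + ε) x - p t x| ≤
          C * (ε ^ θ * t ^ (-((2 * θ + n) / β + κ))) ^ (ω * I₀ / (n + I₀)) := by
  rintro ω ⟨hω0, hω1⟩
  set A := (2 * θ + n) / β
  set a := I₀ / (n + I₀)
  set M := C₂ * (2 * T) ^ κ
  set K := ((volume : Measure (EuclideanSpace ℝ (Fin n))).real (ball 0 1) + 2 * M) *
    C₁ ^ a * T ^ (κ * a)
  have ha : 0 < a := by have := hI₀.1; positivity
  have hmom_unif : ∀ s ∈ Ioc 0 (2 * T),
      ∫⁻ x, ENNReal.ofReal (‖x‖ ^ I₀ * p s x) ≤ ENNReal.ofReal M := fun s hs =>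
    (hmom s hs).trans <| ENNReal.ofReal_le_ofReal <|
      mul_le_mul_of_nonneg_left (Real.rpow_le_rpow hs.1.le hs.2 hκ.le) hC₂.le
  refine ⟨2 + K, by positivity, fun t ⟨ht0, htT⟩ ε ⟨hε0, hεT⟩ => ?_⟩
  have ht2 : t ∈ Ioc 0 (2 * T) := ⟨ht0, by linarith⟩
  have htε2 : t + ε ∈ Ioc 0 (2 * T) := ⟨by linarith, by linarith⟩
  have htrivial : ∫ x, |p (t + ε) x - p t x| ≤ 2 := by
    have := integral_abs_sub_le_integral_add (hintble _ htε2) (hintble _ ht2)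
      (hnonneg _ htε2) (hnonneg _ ht2)
    rwa [hprob _ htε2, hprob _ ht2, one_add_one_eq_two] at this
  have hinterp := integral_abs_sub_le_of_abs_sub_le_of_moment volume (hintble _ htε2)
    (hintble _ ht2) (hnonneg _ htε2) (hnonneg _ ht2) hI₀.1 (by positivity) (by positivity)
    (hsup t ⟨ht0, htT⟩ ε ⟨hε0, hεT⟩) (hmom_unif _ htε2) (hmom_unif _ ht2)
  rw [finrank_euclideanSpace_fin] at hinterp
  rw [mul_div_assoc]
  refine le_add_mul_rpow_of_le_of_le_mul_rpow (by positivity)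
    zero_le_two (by positivity) (by positivity) (mul_le_of_le_one_left ha.le hω1) htrivial
    (hinterp.trans ?_)
  calc _ ≤ _ := mul_le_mul_of_nonneg_left
        (rpow_mul_rpow_neg_le hC₁.le (by positivity) ht0 htT hκ.le ha.le) (by positivity)
    _ = K * (ε ^ θ * t ^ (-(A + κ))) ^ a := by ring

theorem stmt14 (n : ℕ) (hn : 1 ≤ n) (T β κ I₀ θ C₁ C₂ : ℝ)
    (hT : 0 < T) (hβ : 0 < β) (hκ : 0 < κ) (hI₀ : I₀ ∈ Set.Ioo (0 : ℝ) 1)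
    (hθ : θ ∈ Set.Ioc (0 : ℝ) 1) (hC₁ : 0 < C₁) (hC₂ : 0 < C₂)
    (p : ℝ → EuclideanSpace ℝ (Fin n) → ℝ)
    (hmeas : ∀ t ∈ Set.Ioc (0 : ℝ) (2 * T), Measurable (p t))
    (hnonneg : ∀ t ∈ Set.Ioc (0 : ℝ) (2 * T), ∀ x, 0 ≤ p t x)
    (hintble : ∀ t ∈ Set.Ioc (0 : ℝ) (2 * T), Integrable (p t))
    (hprob : ∀ t ∈ Set.Ioc (0 : ℝ) (2 * T), ∫ x, p t x = 1)
    (hsup : ∀ t ∈ Set.Ioc (0 : ℝ) T, ∀ ε ∈ Set.Ioc (0 : ℝ) T, ∀ x : EuclideanSpace ℝ (Fin n),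
      |p (t + ε) x - p t x| ≤ C₁ * ε ^ θ * t ^ (-((2 * θ + n) / β)))
    (hmom : ∀ t ∈ Set.Ioc (0 : ℝ) (2 * T),
      ∫⁻ x, ENNReal.ofReal (‖x‖ ^ I₀ * p t x) ≤ ENNReal.ofReal (C₂ * t ^ κ)) :
    ∀ ω : ℝ, ω ∈ Set.Ioc (0 : ℝ) 1 →
      ∃ C : ℝ, 0 < C ∧ ∀ t ∈ Set.Ioc (0 : ℝ) T, ∀ ε ∈ Set.Ioc (0 : ℝ) T,
        ∫ x, |p (t + ε) x - p t x| ≤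
          C * (ε ^ θ * t ^ (-((2 * θ + n) / β + κ))) ^ (ω * I₀ / (n + I₀)) :=
  stmt14_general n T β κ I₀ θ C₁ C₂ hT hκ hI₀ hC₁ hC₂ p hnonneg hintble hprob hsup hmom
end

section
/- Let Ψ: ℝⁿ → ℂ be measurable with Re Ψ ≥ 0, and suppose there exist M > 0 and β ∈ (0,2] such that Re Ψ(ξ) ≥ ‖ξ‖^β whenever ‖ξ‖ > M. Let μ be a nonnegative Borel measure on ℝⁿ that is finite on bounded sets. If ∫_{ℝⁿ} μ(dξ) / (1 + Re Ψ(ξ))^{1−η} < ∞ for some η ∈ (0,1), then for every δ ∈ (0, ηβ/2), ∫_{ℝⁿ} ‖ξ‖^{2δ} μ(dξ) / (1 + Re Ψ(ξ)) < ∞. -/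
/-! On the ball of radius `M` the integrand is at most `M ^ (2δ)` and `μ` of the ball is finite.
Outside it, `‖ξ‖ ^ (2δ) ≤ (1 + Re Ψ ξ) ^ (2δ/β) ≤ (1 + Re Ψ ξ) ^ η`, so the integrand is dominated by
`(1 + Re Ψ ξ) ^ (η - 1)`, which is integrable by assumption. -/

open MeasureTheory Set

theorem Real.rpow_div_le_inv_rpow_one_sub {r a β s η : ℝ} (hr : 0 ≤ r) (ha : 1 ≤ a)
    (hβ : 0 < β) (hs : 0 ≤ s) (hsη : s ≤ η * β) (hra : r ^ β ≤ a) :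
    r ^ s / a ≤ (a ^ (1 - η))⁻¹ := by
  have ha0 : 0 < a := one_pos.trans_le ha
  have hrs : r ^ s ≤ a ^ η :=
    calc r ^ s = (r ^ β) ^ (s / β) := by rw [← Real.rpow_mul hr, mul_div_cancel₀ _ hβ.ne']
      _ ≤ a ^ (s / β) := by gcongr
      _ ≤ a ^ η := Real.rpow_le_rpow_of_exponent_le ha ((div_le_iff₀ hβ).2 hsη)
  calc r ^ s / a ≤ a ^ η / a := by gcongr
    _ = (a ^ (1 - η))⁻¹ := by
      rw [← Real.rpow_neg ha0.le, neg_sub, Real.rpow_sub ha0, Real.rpow_one]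

theorem MeasureTheory.Integrable.of_bounded_on_of_le_on_compl {α : Type*} [MeasurableSpace α]
    {μ : Measure α} {f g : α → ℝ} {s : Set α} (hf : AEStronglyMeasurable f μ)
    (hs : MeasurableSet s) (hμs : μ s ≠ ⊤) (C : ℝ) (hfs : ∀ x ∈ s, ‖f x‖ ≤ C)
    (hg : Integrable g μ) (hfg : ∀ x ∈ sᶜ, ‖f x‖ ≤ g x) : Integrable f μ := by
  rw [← integrableOn_univ, ← union_compl_self s, integrableOn_union]
  exact ⟨Measure.integrableOn_of_bounded hμs hf (ae_restrict_of_forall_mem hs hfs),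
    hg.integrableOn.mono' hf.restrict (ae_restrict_of_forall_mem hs.compl hfg)⟩

theorem stmt16_general (n : ℕ) (Ψ : EuclideanSpace ℝ (Fin n) → ℂ) (hΨmeas : Measurable Ψ)
    (hΨre : ∀ ξ, 0 ≤ (Ψ ξ).re)
    (M β : ℝ) (hβ : β ∈ Set.Ioc (0 : ℝ) 2)
    (hgrowth : ∀ ξ : EuclideanSpace ℝ (Fin n), M < ‖ξ‖ → ‖ξ‖ ^ β ≤ (Ψ ξ).re)
    (μ : Measure (EuclideanSpace ℝ (Fin n)))
    (hμ : ∀ s : Set (EuclideanSpace ℝ (Fin n)), Bornology.IsBounded s → μ s < ⊤)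
    (η : ℝ)
    (hint : Integrable (fun ξ => ((1 + (Ψ ξ).re) ^ (1 - η))⁻¹) μ) :
    ∀ δ : ℝ, δ ∈ Set.Ioo (0 : ℝ) (η * β / 2) →
      Integrable (fun ξ => ‖ξ‖ ^ (2 * δ) / (1 + (Ψ ξ).re)) μ := by
  rintro δ ⟨hδ0, hδη⟩
  have hΨ1 : ∀ ξ, 1 ≤ 1 + (Ψ ξ).re := fun ξ => le_add_of_nonneg_right (hΨre ξ)
  have hf0 : ∀ ξ : EuclideanSpace ℝ (Fin n), 0 ≤ ‖ξ‖ ^ (2 * δ) / (1 + (Ψ ξ).re) := fun ξ =>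
    div_nonneg (by positivity) (zero_le_one.trans (hΨ1 ξ))
  refine hint.of_bounded_on_of_le_on_compl (s := Metric.closedBall 0 M) (C := M ^ (2 * δ))
    ((measurable_norm.pow_const _).div
      (measurable_const.add (Complex.measurable_re.comp hΨmeas))).aestronglyMeasurable
    measurableSet_closedBall (hμ _ Metric.isBounded_closedBall).ne ?_ ?_
  · intro ξ hξ
    rw [mem_closedBall_zero_iff] at hξ
    calc ‖‖ξ‖ ^ (2 * δ) / (1 + (Ψ ξ).re)‖ = ‖ξ‖ ^ (2 * δ) / (1 + (Ψ ξ).re) :=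
          Real.norm_of_nonneg (hf0 ξ)
      _ ≤ ‖ξ‖ ^ (2 * δ) := div_le_self (by positivity) (hΨ1 ξ)
      _ ≤ M ^ (2 * δ) := by gcongr
  · intro ξ hξ
    rw [mem_compl_iff, mem_closedBall_zero_iff, not_le] at hξ
    rw [Real.norm_of_nonneg (hf0 ξ)]
    exact Real.rpow_div_le_inv_rpow_one_sub (norm_nonneg ξ) (hΨ1 ξ) hβ.1 (by positivity)
      (by linarith) ((hgrowth ξ hξ).trans (le_add_of_nonneg_left zero_le_one))

theorem stmt16 (n : ℕ) (Ψ : EuclideanSpace ℝ (Fin n) → ℂ) (hΨmeas : Measurable Ψ)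
    (hΨre : ∀ ξ, 0 ≤ (Ψ ξ).re)
    (M β : ℝ) (hM : 0 < M) (hβ : β ∈ Set.Ioc (0 : ℝ) 2)
    (hgrowth : ∀ ξ : EuclideanSpace ℝ (Fin n), M < ‖ξ‖ → ‖ξ‖ ^ β ≤ (Ψ ξ).re)
    (μ : Measure (EuclideanSpace ℝ (Fin n)))
    (hμ : ∀ s : Set (EuclideanSpace ℝ (Fin n)), Bornology.IsBounded s → μ s < ⊤)
    (η : ℝ) (hη : η ∈ Set.Ioo (0 : ℝ) 1)
    (hint : Integrable (fun ξ => ((1 + (Ψ ξ).re) ^ (1 - η))⁻¹) μ) :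
    ∀ δ : ℝ, δ ∈ Set.Ioo (0 : ℝ) (η * β / 2) →
      Integrable (fun ξ => ‖ξ‖ ^ (2 * δ) / (1 + (Ψ ξ).re)) μ :=
  stmt16_general n Ψ hΨmeas hΨre M β hβ hgrowth μ hμ η hint
end

section
/- Let Ψ: ℝⁿ → ℂ be measurable with Re Ψ ≥ 0 and sup_{ξ ∈ ℝⁿ} |Ψ(ξ)| / (1 + ‖ξ‖²) < ∞. Let μ be a nonnegative Borel measure on ℝⁿ that is finite on bounded sets. If ∫_{ℝⁿ} ‖ξ‖^{2δ} μ(dξ) / (1 + Re Ψ(ξ)) < ∞ for some δ ∈ (0,1), then for every γ ∈ (0,δ), ∫_{ℝⁿ} |Ψ(ξ)|^γ μ(dξ) / (1 + Re Ψ(ξ)) < ∞. -/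
/-! From ‖Ψ ξ‖ ≤ L (1 + ‖ξ‖²) we get ‖Ψ ξ‖^γ ≤ (2L)^γ on the unit ball and
‖Ψ ξ‖^γ ≤ (2L)^γ ‖ξ‖^{2γ} ≤ (2L)^γ ‖ξ‖^{2δ} outside it. Since 1 + Re Ψ ≥ 1, the integrand is
bounded on the unit ball, which has finite measure, and is dominated by a multiple of the
integrable function ‖ξ‖^{2δ} / (1 + Re Ψ) outside it. -/

open MeasureTheory Complex Set

theorem MeasureTheory.integrable_of_bounded_on_of_le_on_compl {α E : Type*}
    [MeasurableSpace α] [NormedAddCommGroup E] {μ : Measure α} {f : α → E} {g : α → ℝ}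
    {s : Set α} {C : ℝ} (hs : MeasurableSet s) (hμs : μ s ≠ ⊤) (hf : AEStronglyMeasurable f μ)
    (hfs : ∀ x ∈ s, ‖f x‖ ≤ C) (hg : Integrable g μ) (hfg : ∀ x ∉ s, ‖f x‖ ≤ g x) :
    Integrable f μ := by
  have hf_on : IntegrableOn f s μ :=
    Measure.integrableOn_of_bounded hμs hf ((ae_restrict_iff' hs).2 (.of_forall hfs))
  have hf_off : IntegrableOn f sᶜ μ :=
    hg.integrableOn.mono' hf.restrict ((ae_restrict_iff' hs.compl).2 (.of_forall hfg))
  simpa only [union_compl_self, integrableOn_univ] using hf_on.union hf_off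

theorem Real.rpow_le_of_le_mul_one_add_sq_of_le_one {x L r γ : ℝ} (hx : 0 ≤ x)
    (hxL : x ≤ L * (1 + r ^ 2)) (hr₀ : 0 ≤ r) (hr₁ : r ≤ 1) (hγ : 0 ≤ γ) :
    x ^ γ ≤ (2 * L) ^ γ := by
  have hL : 0 ≤ L := nonneg_of_mul_nonneg_left (hx.trans hxL) (by positivity)
  have hr : L * r ^ 2 ≤ L := mul_le_of_le_one_right hL (pow_le_one₀ hr₀ hr₁)
  exact Real.rpow_le_rpow hx (by linarith) hγ

theorem Real.rpow_le_of_le_mul_one_add_sq_of_one_le {x L r γ δ : ℝ} (hx : 0 ≤ x)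
    (hxL : x ≤ L * (1 + r ^ 2)) (hr : 1 ≤ r) (hγ : 0 ≤ γ) (hγδ : γ ≤ δ) :
    x ^ γ ≤ (2 * L) ^ γ * r ^ (2 * δ) := by
  have hL : 0 ≤ L := nonneg_of_mul_nonneg_left (hx.trans hxL) (by positivity)
  have hLr : L ≤ L * r ^ 2 := le_mul_of_one_le_right hL (one_le_pow₀ hr)
  calc x ^ γ ≤ (2 * L * r ^ 2) ^ γ := Real.rpow_le_rpow hx (by linarith) hγ
    _ = (2 * L) ^ γ * r ^ (2 * γ) := by
      rw [Real.mul_rpow (by positivity) (by positivity),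
        ← Real.rpow_natCast_mul (by positivity) 2 γ, Nat.cast_ofNat]
    _ ≤ (2 * L) ^ γ * r ^ (2 * δ) := by gcongr

theorem stmt17_general (n : ℕ) (Ψ : EuclideanSpace ℝ (Fin n) → ℂ) (hΨmeas : Measurable Ψ)
    (hΨre : ∀ ξ, 0 ≤ (Ψ ξ).re)
    (hΨgrowth : ∃ L : ℝ, ∀ ξ, ‖Ψ ξ‖ ≤ L * (1 + ‖ξ‖ ^ 2))
    (μ : Measure (EuclideanSpace ℝ (Fin n)))
    (hμ : ∀ s : Set (EuclideanSpace ℝ (Fin n)), Bornology.IsBounded s → μ s < ⊤)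
    (δ : ℝ)
    (hint : Integrable (fun ξ => ‖ξ‖ ^ (2 * δ) / (1 + (Ψ ξ).re)) μ) :
    ∀ γ : ℝ, γ ∈ Set.Ioo (0 : ℝ) δ →
      Integrable (fun ξ => ‖Ψ ξ‖ ^ γ / (1 + (Ψ ξ).re)) μ := by
  rintro γ ⟨hγ, hγδ⟩
  obtain ⟨L, hL⟩ := hΨgrowth
  have hden : ∀ ξ, 1 ≤ 1 + (Ψ ξ).re := fun ξ => le_add_of_nonneg_right (hΨre ξ)
  have hnorm : ∀ ξ, ‖‖Ψ ξ‖ ^ γ / (1 + (Ψ ξ).re)‖ = ‖Ψ ξ‖ ^ γ / (1 + (Ψ ξ).re) := fun ξ =>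
    Real.norm_of_nonneg (div_nonneg (by positivity) (zero_le_one.trans (hden ξ)))
  have hmeas : Measurable fun ξ => ‖Ψ ξ‖ ^ γ / (1 + (Ψ ξ).re) :=
    (hΨmeas.norm.pow_const γ).div ((measurable_re.comp hΨmeas).const_add 1)
  refine integrable_of_bounded_on_of_le_on_compl (s := Metric.closedBall 0 1)
    (C := (2 * L) ^ γ) (g := fun ξ => (2 * L) ^ γ * (‖ξ‖ ^ (2 * δ) / (1 + (Ψ ξ).re)))
    Metric.isClosed_closedBall.measurableSet (hμ _ Metric.isBounded_closedBall).ne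
    hmeas.aestronglyMeasurable (fun ξ hξ => ?_) (hint.const_mul _) (fun ξ hξ => ?_)
  · rw [mem_closedBall_zero_iff] at hξ
    rw [hnorm]
    exact (div_le_self (by positivity) (hden ξ)).trans
      (Real.rpow_le_of_le_mul_one_add_sq_of_le_one (norm_nonneg _) (hL ξ) (norm_nonneg _) hξ hγ.le)
  · rw [mem_closedBall_zero_iff, not_le] at hξ
    rw [hnorm, ← mul_div_assoc]
    exact div_le_div_of_nonneg_right
      (Real.rpow_le_of_le_mul_one_add_sq_of_one_le (norm_nonneg _) (hL ξ) hξ.le hγ.le hγδ.le)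
      (zero_le_one.trans (hden ξ))

theorem stmt17 (n : ℕ) (Ψ : EuclideanSpace ℝ (Fin n) → ℂ) (hΨmeas : Measurable Ψ)
    (hΨre : ∀ ξ, 0 ≤ (Ψ ξ).re)
    (hΨgrowth : ∃ L : ℝ, ∀ ξ, ‖Ψ ξ‖ ≤ L * (1 + ‖ξ‖ ^ 2))
    (μ : Measure (EuclideanSpace ℝ (Fin n)))
    (hμ : ∀ s : Set (EuclideanSpace ℝ (Fin n)), Bornology.IsBounded s → μ s < ⊤)
    (δ : ℝ) (hδ : δ ∈ Set.Ioo (0 : ℝ) 1)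
    (hint : Integrable (fun ξ => ‖ξ‖ ^ (2 * δ) / (1 + (Ψ ξ).re)) μ) :
    ∀ γ : ℝ, γ ∈ Set.Ioo (0 : ℝ) δ →
      Integrable (fun ξ => ‖Ψ ξ‖ ^ γ / (1 + (Ψ ξ).re)) μ :=
  stmt17_general n Ψ hΨmeas hΨre hΨgrowth μ hμ δ hint
end

section
/- Let Ψ: ℝⁿ → ℂ be measurable with Re Ψ ≥ 0 and sup_{ξ ∈ ℝⁿ} |Ψ(ξ)| / (1 + ‖ξ‖²) < ∞, and suppose there exist M > 0 and β ∈ (0,2] such that Re Ψ(ξ) ≥ ‖ξ‖^β whenever ‖ξ‖ > M. Let μ be a nonnegative Borel measure on ℝⁿ that is finite on bounded sets. Then the following three conditions are equivalent: (i) there exists γ ∈ (0,1) with ∫_{ℝⁿ} |Ψ(ξ)|^γ μ(dξ)/(1 + Re Ψ(ξ)) < ∞; (ii) there exists δ ∈ (0,1) with ∫_{ℝⁿ} ‖ξ‖^{2δ} μ(dξ)/(1 + Re Ψ(ξ)) < ∞; (iii) there exists η ∈ (0,1) with ∫_{ℝⁿ} μ(dξ)/(1 + Re Ψ(ξ))^{1−η}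 < ∞. In other words, the fractal indices satisfy: I_m > 0 ⟺ I_l > 0 ⟺ I_u > 0. -/
/-!
Outside a large ball the hypotheses pin every numerator between powers of `‖ξ‖`:
`‖ξ‖ ^ β ≤ Re Ψ ≤ ‖Ψ‖ ≤ L (1 + ‖ξ‖ ^ 2) ≤ 2L ‖ξ‖ ^ 2`, and likewise for `1 + Re Ψ`, so raising to a power in `(0, 1)` turns each
integrand into a constant multiple of another one, with the exponent changed by the factor `β / 2`
or not at all. Writing `(1 + Re Ψ) ^ (η - 1) = (1 + Re Ψ) ^ η / (1 + Re Ψ)` puts the integrand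
of `I_u` in the same form. Inside the ball all integrands are bounded and `μ` is finite. An index
is the supremum of a subset of `(0, 1)`, so it is positive exactly when that subset is nonempty.
-/

open MeasureTheory Complex Set

noncomputable section

open Metric

theorem integrable_of_bounded_on_of_le_mul_on_compl {α : Type*} [MeasurableSpace α]
    {μ : Measure α} {s : Set α} (hs : MeasurableSet s) (hμs : μ s ≠ ⊤) {f g : α → ℝ}
    (hf : AEStronglyMeasurable f μ) {C₁ C₂ : ℝ} (hbd : ∀ x ∈ s, ‖f x‖ ≤ C₁)
    (hle : ∀ x ∉ s, ‖f x‖ ≤ C₂ * g x) (hg : Integrable g μ) : Integrable f μ := by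
  rw [← integrableOn_univ, ← union_compl_self s, integrableOn_union]
  exact ⟨Measure.integrableOn_of_bounded hμs hf ((ae_restrict_iff' hs).2 (ae_of_all _ hbd)),
    (hg.const_mul C₂).integrableOn.mono' hf.restrict
      ((ae_restrict_iff' hs.compl).2 (ae_of_all _ hle))⟩

section

variable {E : Type*} [NormedAddCommGroup E] [MeasurableSpace E] [OpensMeasurableSpace E]
  {μ : Measure E} {a : E → ℝ}

theorem integrable_div_of_le_mul_outside_closedBall {R : ℝ} (hμ : μ (closedBall 0 R) ≠ ⊤)
    {p q : E → ℝ} (hp : Measurable p) (ha : Measurable a) (hp0 : ∀ x, 0 ≤ p x)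
    (ha1 : ∀ x, 1 ≤ a x) {C₁ C₂ : ℝ} (hbd : ∀ x, ‖x‖ ≤ R → p x ≤ C₁)
    (hle : ∀ x, R < ‖x‖ → p x ≤ C₂ * q x) (hq : Integrable (fun x => q x / a x) μ) :
    Integrable (fun x => p x / a x) μ := by
  have ha0 : ∀ x, 0 < a x := fun x => one_pos.trans_le (ha1 x)
  refine integrable_of_bounded_on_of_le_mul_on_compl measurableSet_closedBall hμ
    (hp.div ha).aestronglyMeasurable (C₁ := C₁) (C₂ := C₂) (fun x hx => ?_) (fun x hx => ?_) hq
  · rw [Real.norm_of_nonneg (div_nonneg (hp0 x) (ha0 x).le)]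
    exact (div_le_self (hp0 x) (ha1 x)).trans (hbd x (mem_closedBall_zero_iff.1 hx))
  · rw [Real.norm_of_nonneg (div_nonneg (hp0 x) (ha0 x).le), ← mul_div_assoc]
    exact div_le_div_of_nonneg_right (hle x (by simpa using hx)) (ha0 x).le

theorem integrable_norm_rpow_div_of_integrable_rpow_div {p : E → ℝ} (ha : Measurable a)
    (ha1 : ∀ x, 1 ≤ a x) {M β γ : ℝ} (hβ : 0 ≤ β) (hγ : 0 ≤ γ) (hμ : μ (closedBall 0 M) ≠ ⊤)
    (hpβ : ∀ x, M < ‖x‖ → ‖x‖ ^ β ≤ p x) (h : Integrable (fun x => p x ^ γ / a x) μ) :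
    Integrable (fun x => ‖x‖ ^ (β * γ) / a x) μ := by
  refine integrable_div_of_le_mul_outside_closedBall hμ (by fun_prop) ha
    (fun x => by positivity) ha1 (C₁ := M ^ (β * γ)) (C₂ := 1)
    (fun x hx => Real.rpow_le_rpow (norm_nonneg x) hx (mul_nonneg hβ hγ)) (fun x hx => ?_) h
  rw [one_mul, Real.rpow_mul (norm_nonneg x)]
  exact Real.rpow_le_rpow (by positivity) (hpβ x hx) hγ

theorem integrable_rpow_div_of_integrable_norm_rpow_div {p : E → ℝ} (hp : Measurable p)
    (hp0 : ∀ x, 0 ≤ p x) (ha : Measurable a) (ha1 : ∀ x, 1 ≤ a x) {K δ : ℝ} (hδ : 0 ≤ δ)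
    (hμ : μ (closedBall 0 1) ≠ ⊤) (hpK : ∀ x, p x ≤ K * (1 + ‖x‖ ^ 2))
    (h : Integrable (fun x => ‖x‖ ^ (2 * δ) / a x) μ) :
    Integrable (fun x => p x ^ δ / a x) μ := by
  have hK : 0 ≤ K := by simpa using (hp0 0).trans (hpK 0)
  refine integrable_div_of_le_mul_outside_closedBall hμ (by fun_prop) ha
    (fun x => Real.rpow_nonneg (hp0 x) δ) ha1 (C₁ := (2 * K) ^ δ) (C₂ := (2 * K) ^ δ)
    (fun x hx => ?_) (fun x hx => ?_) h
  · have hx2 : 1 + ‖x‖ ^ 2 ≤ 2 := by nlinarith [norm_nonneg x]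
    refine Real.rpow_le_rpow (hp0 x) ((hpK x).trans ?_) hδ
    nlinarith [mul_le_mul_of_nonneg_left hx2 hK]
  · have hx2 : 1 + ‖x‖ ^ 2 ≤ 2 * ‖x‖ ^ 2 := by nlinarith
    calc p x ^ δ ≤ (2 * K * ‖x‖ ^ 2) ^ δ :=
          Real.rpow_le_rpow (hp0 x) ((hpK x).trans (by nlinarith [mul_le_mul_of_nonneg_left hx2 hK])) hδ
      _ = (2 * K) ^ δ * ‖x‖ ^ (2 * δ) := by
          rw [Real.mul_rpow (by positivity) (by positivity), ← Real.rpow_natCast_mul (norm_nonneg x)]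
          norm_num

end

theorem inv_rpow_one_sub_eq_rpow_div {x : ℝ} (hx : 0 < x) (η : ℝ) :
    (x ^ (1 - η))⁻¹ = x ^ η / x := by
  rw [← Real.rpow_neg hx.le, neg_sub, Real.rpow_sub hx, Real.rpow_one]

theorem pos_sSup_sep_Ioo_iff {a b : ℝ} (ha : 0 ≤ a) {P : ℝ → Prop} :
    0 < sSup {x | x ∈ Ioo a b ∧ P x} ↔ ∃ x ∈ Ioo a b, P x := by
  refine ⟨fun h => ?_, fun ⟨x, hx, hPx⟩ => ?_⟩
  · by_contra hne
    have hempty : {x | x ∈ Ioo a b ∧ P x} = ∅ := eq_empty_of_forall_notMem fun x hx => hne ⟨x, hx⟩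
    rw [hempty, Real.sSup_empty] at h
    exact h.false
  · exact (ha.trans_lt hx.1).trans_le (le_csSup ⟨b, fun y hy => hy.1.2.le⟩ ⟨hx, hPx⟩)

theorem stmt18_general (n : ℕ) (Ψ : EuclideanSpace ℝ (Fin n) → ℂ) (hΨmeas : Measurable Ψ)
    (hΨre : ∀ ξ, 0 ≤ (Ψ ξ).re)
    (hΨgrowth : ∃ L : ℝ, ∀ ξ, ‖Ψ ξ‖ ≤ L * (1 + ‖ξ‖ ^ 2))
    (M β : ℝ) (hβ : β ∈ Set.Ioc (0 : ℝ) 2)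
    (hgrowth : ∀ ξ : EuclideanSpace ℝ (Fin n), M < ‖ξ‖ → ‖ξ‖ ^ β ≤ (Ψ ξ).re)
    (μ : Measure (EuclideanSpace ℝ (Fin n)))
    (hμ : ∀ s : Set (EuclideanSpace ℝ (Fin n)), Bornology.IsBounded s → μ s < ⊤) :
    ((∃ γ ∈ Set.Ioo (0 : ℝ) 1,
        Integrable (fun ξ => ‖Ψ ξ‖ ^ γ / (1 + (Ψ ξ).re)) μ) ↔
      (∃ δ ∈ Set.Ioo (0 : ℝ) 1,
        Integrable (fun ξ => ‖ξ‖ ^ (2 * δ) / (1 + (Ψ ξ).re)) μ)) ∧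
    ((∃ δ ∈ Set.Ioo (0 : ℝ) 1,
        Integrable (fun ξ => ‖ξ‖ ^ (2 * δ) / (1 + (Ψ ξ).re)) μ) ↔
      (∃ η ∈ Set.Ioo (0 : ℝ) 1,
        Integrable (fun ξ => ((1 + (Ψ ξ).re) ^ (1 - η))⁻¹) μ)) ∧
    (0 < fractalIndexM n Ψ μ ↔ 0 < fractalIndexL n Ψ μ) ∧
    (0 < fractalIndexL n Ψ μ ↔ 0 < fractalIndexU n Ψ μ) := by
  obtain ⟨L, hL⟩ := hΨgrowth
  have hball R : μ (closedBall 0 R) ≠ ⊤ := (hμ _ isBounded_closedBall).ne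
  have ha : Measurable fun ξ => 1 + (Ψ ξ).re := by fun_prop
  have ha1 ξ : 1 ≤ 1 + (Ψ ξ).re := le_add_of_nonneg_right (hΨre ξ)
  have hu (η : ℝ) : (fun ξ => ((1 + (Ψ ξ).re) ^ (1 - η))⁻¹) =
      fun ξ => (1 + (Ψ ξ).re) ^ η / (1 + (Ψ ξ).re) :=
    funext fun ξ => inv_rpow_one_sub_eq_rpow_div (one_pos.trans_le (ha1 ξ)) η
  have hexp (γ : ℝ) (hγ : γ ∈ Ioo (0 : ℝ) 1) : γ * β / 2 ∈ Ioo (0 : ℝ) 1 ∧ 2 * (γ * β / 2) = β * γ :=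
    ⟨⟨by nlinarith [hβ.1, hγ.1], by nlinarith [hβ.2, hγ.1, hγ.2]⟩, by ring⟩
  simp only [fractalIndexM, fractalIndexL, fractalIndexU, pos_sSup_sep_Ioo_iff le_rfl, hu]
  refine (fun hml hlu => ⟨hml, hlu, hml, hlu⟩) ⟨fun ⟨γ, hγ, h⟩ => ⟨γ * β / 2, (hexp γ hγ).1, ?_⟩,
    fun ⟨δ, hδ, h⟩ => ⟨δ, hδ, ?_⟩⟩ ⟨fun ⟨δ, hδ, h⟩ => ⟨δ, hδ, ?_⟩,
    fun ⟨η, hη, h⟩ => ⟨η * β / 2, (hexp η hη).1, ?_⟩⟩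
  · rw [(hexp γ hγ).2]
    exact integrable_norm_rpow_div_of_integrable_rpow_div ha ha1 hβ.1.le hγ.1.le (hball M)
      (fun ξ hξ => (hgrowth ξ hξ).trans (re_le_norm _)) h
  · exact integrable_rpow_div_of_integrable_norm_rpow_div (by fun_prop) (fun _ => norm_nonneg _)
      ha ha1 hδ.1.le (hball 1) hL h
  · refine integrable_rpow_div_of_integrable_norm_rpow_div ha (fun ξ => (ha1 ξ).trans' zero_le_one)
      ha ha1 hδ.1.le (hball 1) (K := 1 + L) (fun ξ => ?_) h
    linarith [re_le_norm (Ψ ξ), hL ξ, sq_nonneg ‖ξ‖]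
  · rw [(hexp η hη).2]
    exact integrable_norm_rpow_div_of_integrable_rpow_div ha ha1 hβ.1.le hη.1.le (hball M)
      (fun ξ hξ => (hgrowth ξ hξ).trans (le_add_of_nonneg_left zero_le_one)) h

theorem stmt18 (n : ℕ) (Ψ : EuclideanSpace ℝ (Fin n) → ℂ) (hΨmeas : Measurable Ψ)
    (hΨre : ∀ ξ, 0 ≤ (Ψ ξ).re)
    (hΨgrowth : ∃ L : ℝ, ∀ ξ, ‖Ψ ξ‖ ≤ L * (1 + ‖ξ‖ ^ 2))
    (M β : ℝ) (hM : 0 < M) (hβ : β ∈ Set.Ioc (0 : ℝ) 2)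
    (hgrowth : ∀ ξ : EuclideanSpace ℝ (Fin n), M < ‖ξ‖ → ‖ξ‖ ^ β ≤ (Ψ ξ).re)
    (μ : Measure (EuclideanSpace ℝ (Fin n)))
    (hμ : ∀ s : Set (EuclideanSpace ℝ (Fin n)), Bornology.IsBounded s → μ s < ⊤) :
    ((∃ γ ∈ Set.Ioo (0 : ℝ) 1,
        Integrable (fun ξ => ‖Ψ ξ‖ ^ γ / (1 + (Ψ ξ).re)) μ) ↔
      (∃ δ ∈ Set.Ioo (0 : ℝ) 1,
        Integrable (fun ξ => ‖ξ‖ ^ (2 * δ) / (1 + (Ψ ξ).re)) μ)) ∧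
    ((∃ δ ∈ Set.Ioo (0 : ℝ) 1,
        Integrable (fun ξ => ‖ξ‖ ^ (2 * δ) / (1 + (Ψ ξ).re)) μ) ↔
      (∃ η ∈ Set.Ioo (0 : ℝ) 1,
        Integrable (fun ξ => ((1 + (Ψ ξ).re) ^ (1 - η))⁻¹) μ)) ∧
    (0 < fractalIndexM n Ψ μ ↔ 0 < fractalIndexL n Ψ μ) ∧
    (0 < fractalIndexL n Ψ μ ↔ 0 < fractalIndexU n Ψ μ) :=
  stmt18_general n Ψ hΨmeas hΨre hΨgrowth M β hβ hgrowth μ hμ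
end
end
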